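/- arXiv:2504.03069 — 2 statements merged into one kernel-verified Lean document; each statement's English description precedes it below -/
import Mathlib

section
/- Let f: ℝ^n × ℝ^m → ℝ be C¹ with ∇f globally Lipschitz with constant L > 0, let τ > 0, γ > 0, and let η > 0 satisfy ηL·max{1/τ, 1} < 1. Then a point z ∈ ℝ^{n+m} is a fixed point of the GEG map, i.e. w(z) = z, if and only if ∇f(z) = 0 (equivalently F(z) = 0). -/
open Matrix MeasureTheory

noncomputable section

abbrev Spc (n m : ℕ) : Type := EuclideanSpace ℝ (Fin n ⊕ Fin m)

variable {n m : ℕ}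

def ofVec (v : (Fin n ⊕ Fin m) → ℝ) : Spc n m := (WithLp.equiv 2 _).symm v

def mulVecE (A : Matrix (Fin n ⊕ Fin m) (Fin n ⊕ Fin m) ℝ) (v : Spc n m) : Spc n m :=
  ofVec (A.mulVec v)

def Fvec (f : Spc n m → ℝ) (z : Spc n m) : Spc n m :=
  ofVec (Sum.elim (fun i => gradient f z (Sum.inl i)) (fun j => - gradient f z (Sum.inr j)))

def Lam (n m : ℕ) (τ : ℝ) : Matrix (Fin n ⊕ Fin m) (Fin n ⊕ Fin m) ℝ :=
  Matrix.diagonal (Sum.elim (fun _ => 1/τ) (fun _ => 1))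

def hess (f : Spc n m → ℝ) (z : Spc n m) : Matrix (Fin n ⊕ Fin m) (Fin n ⊕ Fin m) ℝ :=
  Matrix.of fun i j => gradient (fun w => gradient f w j) z i

def Hmat (f : Spc n m → ℝ) (z : Spc n m) : Matrix (Fin n ⊕ Fin m) (Fin n ⊕ Fin m) ℝ :=
  Matrix.diagonal (Sum.elim (fun _ => (-1:ℝ)) (fun _ => 1)) * hess f z

def geg (f : Spc n m → ℝ) (η τ γ : ℝ) (z : Spc n m) : Spc n m :=
  z - (γ * η) • mulVecE (Lam n m τ) (Fvec f (z - η • mulVecE (Lam n m τ) (Fvec f z)))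

def Jmat (f : Spc n m → ℝ) (η τ γ : ℝ) (z : Spc n m) :
    Matrix (Fin n ⊕ Fin m) (Fin n ⊕ Fin m) ℝ :=
  1 + (γ * η) • ((Lam n m τ * Hmat f (z - η • mulVecE (Lam n m τ) (Fvec f z))) *
      (1 + η • (Lam n m τ * Hmat f z)))

def withX (z u : Spc n m) : Spc n m :=
  ofVec (Sum.elim (fun i => z (Sum.inl i)) (fun j => u (Sum.inr j)))

def IsLocalSaddle (f : Spc n m → ℝ) (z : Spc n m) : Prop :=
  ∃ U ∈ nhds z, ∀ u ∈ U, f (withX z u) ≤ f z ∧ f z ≤ f (withX u z)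

def cSpec (A : Matrix (Fin n ⊕ Fin m) (Fin n ⊕ Fin m) ℝ) : Set ℂ :=
  spectrum ℂ (A.map (algebraMap ℝ ℂ))


lemma ofVec_apply (v : (Fin n ⊕ Fin m) → ℝ) (i) : ofVec v i = v i := rfl

lemma mulVecE_Lam_apply (τ : ℝ) (v : Spc n m) (i) :
    mulVecE (Lam n m τ) v i = Sum.elim (fun _ => 1/τ) (fun _ => (1:ℝ)) i * v i := by
  simp [mulVecE, ofVec_apply, Lam, Matrix.mulVec_diagonal]

lemma norm_le_of_abs_le (u v : Spc n m) (c : ℝ) (hc : 0 ≤ c)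
    (h : ∀ i, |u i| ≤ c * |v i|) : ‖u‖ ≤ c * ‖v‖ := by
  rw [EuclideanSpace.norm_eq, EuclideanSpace.norm_eq,
    ← Real.sqrt_sq hc, ← Real.sqrt_mul (by positivity)]
  apply Real.sqrt_le_sqrt
  rw [Finset.mul_sum]
  apply Finset.sum_le_sum
  intro i _
  simp only [Real.norm_eq_abs]
  calc |u i| ^ 2 ≤ (c * |v i|) ^ 2 := by
        apply pow_le_pow_left₀ (abs_nonneg _) (h i)
    _ = c ^ 2 * |v i| ^ 2 := by ring

lemma norm_Fvec (f : Spc n m → ℝ) (z : Spc n m) : ‖Fvec f z‖ = ‖gradient f z‖ := by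
  rw [EuclideanSpace.norm_eq, EuclideanSpace.norm_eq]
  congr 1
  apply Finset.sum_congr rfl
  intro i _
  cases i <;> simp [Fvec, ofVec_apply]

lemma Fvec_eq_zero_iff (f : Spc n m → ℝ) (z : Spc n m) :
    Fvec f z = 0 ↔ gradient f z = 0 := by
  constructor
  · intro h
    ext i
    have hi : Fvec f z i = 0 := by simp [h]
    cases i with
    | inl i => simpa [Fvec, ofVec_apply] using hi
    | inr j => simpa [Fvec, ofVec_apply] using hi
  · intro h
    ext i
    have hz : ∀ j, gradient f z j = 0 := fun j => by simp [h]
    cases i <;> simp [Fvec, ofVec_apply, hz]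


/-- for ηL·max{1/τ,1} < 1, z is a fixed point of the GEG map iff
∇f(z) = 0 (equivalently F(z) = 0). -/
theorem stmt12 (n m : ℕ) (f : Spc n m → ℝ) (L τ γ η : ℝ)
    (hf : ContDiff ℝ 1 f) (hL : 0 < L)
    (hLip : ∀ z w : Spc n m, ‖gradient f z - gradient f w‖ ≤ L * ‖z - w‖)
    (hτ : 0 < τ) (hγ : 0 < γ) (hη : 0 < η)
    (hstep : η * L * max (1 / τ) 1 < 1) (z : Spc n m) :
    geg f η τ γ z = z ↔ gradient f z = 0 := by
  have hmax : (0:ℝ) ≤ max (1/τ) 1 := le_max_of_le_right zero_le_one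
  have hbound : ∀ v : Spc n m, ‖mulVecE (Lam n m τ) v‖ ≤ max (1/τ) 1 * ‖v‖ := by
    intro v
    apply norm_le_of_abs_le _ _ _ hmax
    intro i
    rw [mulVecE_Lam_apply, abs_mul]
    apply mul_le_mul_of_nonneg_right _ (abs_nonneg _)
    cases i with
    | inl i =>
      simp only [Sum.elim_inl]
      rw [abs_of_pos (by positivity : (0:ℝ) < 1/τ)]
      exact le_max_left _ _
    | inr j =>
      simp only [Sum.elim_inr, abs_one]
      exact le_max_right _ _
  have hmv0 : ∀ v : Spc n m, mulVecE (Lam n m τ) v = 0 ↔ v = 0 := by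
    intro v
    constructor
    · intro h
      ext i
      have hi : mulVecE (Lam n m τ) v i = 0 := by simp [h]
      rw [mulVecE_Lam_apply] at hi
      have hd : Sum.elim (fun _ => 1/τ) (fun _ => (1:ℝ)) i ≠ 0 := by
        cases i <;> simp <;> positivity
      have : v i = 0 := by
        have := mul_eq_zero.mp hi
        tauto
      simpa using this
    · intro h
      subst h
      ext i
      rw [mulVecE_Lam_apply]
      simp
  set z' := z - η • mulVecE (Lam n m τ) (Fvec f z) with hz'
  have hfix : geg f η τ γ z = z ↔ Fvec f z' = 0 := by
    rw [geg, sub_eq_self, smul_eq_zero, hmv0]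
    constructor
    · rintro (h | h)
      · exact absurd h (by positivity)
      · exact h
    · exact fun h => Or.inr h
  rw [hfix]
  constructor
  · intro h
    have hg' : gradient f z' = 0 := (Fvec_eq_zero_iff f z').mp h
    have hzz' : z - z' = η • mulVecE (Lam n m τ) (Fvec f z) := by
      rw [hz']; abel
    have hest : ‖gradient f z‖ ≤ η * L * max (1/τ) 1 * ‖gradient f z‖ := by
      calc ‖gradient f z‖ = ‖gradient f z - gradient f z'‖ := by rw [hg', sub_zero]
        _ ≤ L * ‖z - z'‖ := hLip z z'
        _ = L * (η * ‖mulVecE (Lam n m τ) (Fvec f z)‖) := by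
            rw [hzz', norm_smul, Real.norm_eq_abs, abs_of_pos hη]
        _ ≤ L * (η * (max (1/τ) 1 * ‖Fvec f z‖)) := by
            gcongr
            exact hbound _
        _ = η * L * max (1/τ) 1 * ‖gradient f z‖ := by rw [norm_Fvec]; ring
    by_contra hne
    have hpos : 0 < ‖gradient f z‖ := norm_pos_iff.mpr hne
    nlinarith
  · intro h
    have hF : Fvec f z = 0 := (Fvec_eq_zero_iff f z).mpr h
    have hz'eq : z' = z := by
      have h0 : mulVecE (Lam n m τ) (0 : Spc n m) = 0 := (hmv0 0).mpr rfl
      rw [hz', hF, h0, smul_zero, sub_zero]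
    rw [hz'eq, Fvec_eq_zero_iff]
    exact h
end
end

section
/- Let f: ℝ^n × ℝ^m → ℝ be C², z ∈ ℝ^{n+m}, τ > 0, and set ω = 1/τ. Write A = ∇²_{xx} f(z), B = ∇²_{xy} f(z) (so ∇²_{yx} f(z) = Bᵀ), C = ∇²_{yy} f(z), and let U be the (n+m)×(n+m) block matrix U = [[0, √ω·I], [I, 0]] (swapping the x- and y-blocks with scaling √ω). Then U is invertible and U(Λ_τ H(z))U⁻¹ = H̄_τ(z), where H̄_τ(z) = [[C, √ω·Bᵀ], [−√ω·B, −ω·A]]; consequently Λ_τ H(z) and H̄_τ(z) have the same complex eigenvalues, and the symmetric part (H̄_τ(z) + H̄_τ(z)ᵀ)/2 equals the block-diagonal matrix blockdiag(C, −ω·A). -/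
open Matrix MeasureTheory

noncomputable section

variable {n m : ℕ}

lemma grad_coord (f : Spc n m → ℝ) (w : Spc n m) (j : Fin n ⊕ Fin m) :
    gradient f w j = fderiv ℝ f w (EuclideanSpace.single j 1) := by
  have h := InnerProductSpace.toDual_symm_apply (𝕜 := ℝ) (E := Spc n m)
    (y := fderiv ℝ f w) (x := EuclideanSpace.single j 1)
  rw [gradient]
  rw [EuclideanSpace.inner_single_right] at h
  simpa using h

lemma hess_symm (f : Spc n m → ℝ) (hf : ContDiff ℝ 2 f) (z : Spc n m)
    (i j : Fin n ⊕ Fin m) : hess f z i j = hess f z j i := by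
  have key : ∀ i j : Fin n ⊕ Fin m, hess f z i j =
      fderiv ℝ (fderiv ℝ f) z (EuclideanSpace.single i 1) (EuclideanSpace.single j 1) := by
    intro i j
    have hdiff : DifferentiableAt ℝ (fderiv ℝ f) z := by
      have : ContDiff ℝ 1 (fderiv ℝ f) := hf.fderiv_right (by norm_num)
      exact this.differentiable one_ne_zero z
    have h1 : (fun w => gradient f w j) = fun w => fderiv ℝ f w (EuclideanSpace.single j 1) := by
      funext w; exact grad_coord f w j
    rw [hess, Matrix.of_apply, grad_coord, h1]
    rw [fderiv_clm_apply hdiff (differentiableAt_const _)]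
    simp
  rw [key i j, key j i]
  exact (hf.contDiffAt.isSymmSndFDerivAt (by norm_num)) _ _

lemma specAux {α β : Type*} [Fintype α] [Fintype β] [DecidableEq α] [DecidableEq β]
    (X : Matrix α α ℂ) (Y : Matrix β β ℂ) (U : Matrix β α ℂ) (V : Matrix α β ℂ)
    (hUV : U * V = 1) (hVU : V * U = 1) (hY : U * X * V = Y) (μ : ℂ)
    (h : IsUnit (algebraMap ℂ (Matrix α α ℂ) μ - X)) :
    IsUnit (algebraMap ℂ (Matrix β β ℂ) μ - Y) := by
  obtain ⟨u, hu⟩ := h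
  set M : Matrix α α ℂ := algebraMap ℂ (Matrix α α ℂ) μ - X
  set N : Matrix α α ℂ := ↑u⁻¹
  have hMN : M * N = 1 := by rw [← hu]; exact u.mul_inv
  have key : U * M * V = algebraMap ℂ (Matrix β β ℂ) μ - Y := by
    have : U * M * V = U * algebraMap ℂ (Matrix α α ℂ) μ * V - U * X * V := by
      simp [M, Matrix.mul_sub, Matrix.sub_mul]
    rw [this, hY]
    congr 1
    rw [Algebra.algebraMap_eq_smul_one, Algebra.algebraMap_eq_smul_one,
      Matrix.mul_smul, Matrix.smul_mul, Matrix.mul_one, hUV]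
  have hprod : (U * M * V) * (U * N * V) = 1 := by
    calc (U * M * V) * (U * N * V) = U * (M * ((V * U) * N)) * V := by
          simp only [Matrix.mul_assoc]
      _ = 1 := by rw [hVU, Matrix.one_mul, hMN, Matrix.mul_one, hUV]
  rw [← key, Matrix.isUnit_iff_isUnit_det]
  have := congrArg Matrix.det hprod
  rw [Matrix.det_mul, Matrix.det_one] at this
  exact IsUnit.of_mul_eq_one _ this

/-- with ω = 1/τ, A = ∇²ₓₓf(z), B = ∇²ₓᵧf(z) (so ∇²ᵧₓf(z) = Bᵀ),
C = ∇²ᵧᵧf(z) and U = [[0, √ω·I], [I, 0]], the matrix U is invertible,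
U(Λ_τ H(z))U⁻¹ = H̄_τ(z) := [[C, √ω·Bᵀ], [−√ω·B, −ω·A]]; consequently Λ_τ H(z) and
H̄_τ(z) have the same complex eigenvalues, and (H̄_τ(z) + H̄_τ(z)ᵀ)/2 = blockdiag(C, −ω·A). -/
theorem stmt19 (n m : ℕ) (f : Spc n m → ℝ) (hf : ContDiff ℝ 2 f)
    (z : Spc n m) (τ ω : ℝ) (hτ : 0 < τ) (hω : ω = 1 / τ)
    (A : Matrix (Fin n) (Fin n) ℝ)
    (hA : A = Matrix.of fun i j => hess f z (Sum.inl i) (Sum.inl j))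
    (B : Matrix (Fin n) (Fin m) ℝ)
    (hB : B = Matrix.of fun i j => hess f z (Sum.inl i) (Sum.inr j))
    (C : Matrix (Fin m) (Fin m) ℝ)
    (hC : C = Matrix.of fun i j => hess f z (Sum.inr i) (Sum.inr j))
    (U : Matrix (Fin m ⊕ Fin n) (Fin n ⊕ Fin m) ℝ)
    (hU : U = Matrix.fromBlocks 0 (Real.sqrt ω • 1) 1 0)
    (HBar : Matrix (Fin m ⊕ Fin n) (Fin m ⊕ Fin n) ℝ)
    (hHBar : HBar = Matrix.fromBlocks C (Real.sqrt ω • Bᵀ) (-(Real.sqrt ω) • B) (-ω • A)) :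
    (∀ (i : Fin n) (j : Fin m), hess f z (Sum.inr j) (Sum.inl i) = B i j) ∧
    (∃ V : Matrix (Fin n ⊕ Fin m) (Fin m ⊕ Fin n) ℝ,
      U * V = 1 ∧ V * U = 1 ∧ U * (Lam n m τ * Hmat f z) * V = HBar) ∧
    spectrum ℂ ((Lam n m τ * Hmat f z).map (algebraMap ℝ ℂ)) =
      spectrum ℂ (HBar.map (algebraMap ℝ ℂ)) ∧
    (1 / 2 : ℝ) • (HBar + HBarᵀ) = Matrix.fromBlocks C 0 0 (-ω • A) := by
  have hω0 : 0 < ω := by rw [hω]; positivity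
  set s := Real.sqrt ω with hs
  have hss : s * s = ω := Real.mul_self_sqrt hω0.le
  have hs0 : s ≠ 0 := by positivity
  have hsym := hess_symm f hf z
  -- part 1
  have part1 : ∀ (i : Fin n) (j : Fin m), hess f z (Sum.inr j) (Sum.inl i) = B i j := by
    intro i j; rw [hsym, hB]; rfl
  -- block decomposition of Lam * Hmat
  have hX : Lam n m τ * Hmat f z = Matrix.fromBlocks (-ω • A) (-ω • B) Bᵀ C := by
    ext i j
    rcases i with i | i <;> rcases j with j | j <;>
      simp [Lam, Hmat, Matrix.diagonal_mul, ← Matrix.mul_assoc, Matrix.diagonal_mul_diagonal,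
        hA, hB, hC, hω, part1]
  -- the inverse
  set V : Matrix (Fin n ⊕ Fin m) (Fin m ⊕ Fin n) ℝ :=
    Matrix.fromBlocks 0 1 (s⁻¹ • 1) 0 with hV
  have hUV : U * V = 1 := by
    rw [hU, hV, ← Matrix.fromBlocks_one]
    simp [Matrix.fromBlocks_multiply, Matrix.smul_mul, Matrix.mul_smul, smul_smul,
      mul_inv_cancel₀ hs0, inv_mul_cancel₀ hs0, one_smul]
  have hVU : V * U = 1 := by
    rw [hU, hV, ← Matrix.fromBlocks_one]
    simp [Matrix.fromBlocks_multiply, Matrix.smul_mul, Matrix.mul_smul, smul_smul,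
      inv_mul_cancel₀ hs0, mul_inv_cancel₀ hs0, one_smul]
  have hωs : ω * s⁻¹ = s := by
    rw [← hss]; field_simp
  have hωs' : s⁻¹ * ω = s := by rw [mul_comm]; exact hωs
  have hconj : U * (Lam n m τ * Hmat f z) * V = HBar := by
    rw [hX, hU, hV, hHBar]
    simp [Matrix.fromBlocks_multiply, Matrix.smul_mul, Matrix.mul_smul, smul_smul,
      mul_inv_cancel₀ hs0, inv_mul_cancel₀ hs0, one_smul, neg_smul, hωs, hωs']
  refine ⟨part1, ⟨V, hUV, hVU, hconj⟩, ?_, ?_⟩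
  · -- spectrum
    have hmapUV : U.map (algebraMap ℝ ℂ) * V.map (algebraMap ℝ ℂ) = 1 := by
      rw [← Matrix.map_mul, hUV, Matrix.map_one _ (map_zero _) (map_one _)]
    have hmapVU : V.map (algebraMap ℝ ℂ) * U.map (algebraMap ℝ ℂ) = 1 := by
      rw [← Matrix.map_mul, hVU, Matrix.map_one _ (map_zero _) (map_one _)]
    have hmapconj : U.map (algebraMap ℝ ℂ) * (Lam n m τ * Hmat f z).map (algebraMap ℝ ℂ) *
        V.map (algebraMap ℝ ℂ) = HBar.map (algebraMap ℝ ℂ) := by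
      rw [← Matrix.map_mul, ← Matrix.map_mul, hconj]
    have hback : V.map (algebraMap ℝ ℂ) * HBar.map (algebraMap ℝ ℂ) * U.map (algebraMap ℝ ℂ) =
        (Lam n m τ * Hmat f z).map (algebraMap ℝ ℂ) := by
      rw [← hmapconj]
      calc V.map (algebraMap ℝ ℂ) * (U.map (algebraMap ℝ ℂ) *
            (Lam n m τ * Hmat f z).map (algebraMap ℝ ℂ) * V.map (algebraMap ℝ ℂ)) *
            U.map (algebraMap ℝ ℂ)
          = (V.map (algebraMap ℝ ℂ) * U.map (algebraMap ℝ ℂ)) *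
            (Lam n m τ * Hmat f z).map (algebraMap ℝ ℂ) *
            (V.map (algebraMap ℝ ℂ) * U.map (algebraMap ℝ ℂ)) := by
            simp only [Matrix.mul_assoc]
        _ = _ := by rw [hmapVU, Matrix.one_mul, Matrix.mul_one]
    ext μ
    rw [spectrum.mem_iff, spectrum.mem_iff, not_iff_not]
    exact ⟨specAux _ _ _ _ hmapUV hmapVU hmapconj μ,
      specAux _ _ _ _ hmapVU hmapUV hback μ⟩
  · -- symmetric part
    subst hHBar
    ext i j
    rcases i with i | i <;> rcases j with j | j
    · simp [hC, hsym (Sum.inr j) (Sum.inr i)]; ring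
    · simp
    · simp
    · simp [hA, hsym (Sum.inl j) (Sum.inl i)]; ring
end
end
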